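/- Let a₁, a₂ ∈ C^α([0,1]) (for some 1/2 < α ≤ 1) with a₁(0) = a₂(0), and let g₁, g₂ ∈ L²((0,1)) satisfy ∫₀¹ |g₁(t) - g₂(t)|² dt/t < ∞. Then ∫₀¹ |a₁(t)g₁(t) - a₂(t)g₂(t)|² dt/t < ∞, with the quantitative bound ∫₀¹ |a₁g₁ - a₂g₂|² dt/t ≤ 4([a₁]_α² + [a₂]_α²) ‖g₁‖²_{L²} + 2‖a₂‖²_∞ ∫₀¹ |g₁ - g₂|² dt/t. -/

import Mathlib

/-!
Write `a₁ g₁ - a₂ g₂ = (a₁ - a₂) g₁ + a₂ (g₁ - g₂)`. Since `a₁(0) = a₂(0)`, the Hölder bounds give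
`|a₁ t - a₂ t| ≤ (H₁ + H₂) t^α`, and `t^{2α} ≤ t` on `[0, 1]` because `α ≥ 1/2`; so the weight `1/t`
is absorbed by the first term, while the second is controlled by `‖a₂‖_∞` and the compatibility
integral. Integrating the resulting pointwise bound gives both integrability and the estimate.
-/

open MeasureTheory Set

lemma abs_sub_le_of_holder_of_eq_at_zero {α H₁ H₂ t : ℝ} {a₁ a₂ : ℝ → ℝ} {s : Set ℝ}
    (h1 : ∀ x ∈ s, ∀ y ∈ s, |a₁ x - a₁ y| ≤ H₁ * |x - y| ^ α)
    (h2 : ∀ x ∈ s, ∀ y ∈ s, |a₂ x - a₂ y| ≤ H₂ * |x - y| ^ α)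
    (h0 : a₁ 0 = a₂ 0) (hs0 : (0 : ℝ) ∈ s) (ht : t ∈ s) :
    |a₁ t - a₂ t| ≤ (H₁ + H₂) * |t| ^ α :=
  calc |a₁ t - a₂ t| = |(a₁ t - a₁ 0) - (a₂ t - a₂ 0)| := by rw [h0]; ring_nf
    _ ≤ |a₁ t - a₁ 0| + |a₂ t - a₂ 0| := abs_sub _ _
    _ ≤ H₁ * |t - 0| ^ α + H₂ * |t - 0| ^ α := add_le_add (h1 t ht 0 hs0) (h2 t ht 0 hs0)
    _ = (H₁ + H₂) * |t| ^ α := by rw [sub_zero]; ring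

lemma rpow_sq_le_self {α t : ℝ} (hα : 1 / 2 ≤ α) (ht0 : 0 ≤ t) (ht1 : t ≤ 1) :
    (t ^ α) ^ 2 ≤ t :=
  calc (t ^ α) ^ 2 = t ^ (α * 2) := by rw [Real.rpow_mul ht0, Real.rpow_two]
    _ ≤ t ^ (1 : ℝ) := Real.rpow_le_rpow_of_exponent_ge' ht0 ht1 zero_le_one (by linarith)
    _ = t := Real.rpow_one t

lemma sq_mul_sub_mul_le (x₁ x₂ y₁ y₂ : ℝ) :
    (x₁ * y₁ - x₂ * y₂) ^ 2 ≤ 2 * ((x₁ - x₂) ^ 2 * y₁ ^ 2) + 2 * (x₂ ^ 2 * (y₁ - y₂) ^ 2) :=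
  calc (x₁ * y₁ - x₂ * y₂) ^ 2 = ((x₁ - x₂) * y₁ + x₂ * (y₁ - y₂)) ^ 2 := by ring
    _ ≤ 2 * (((x₁ - x₂) * y₁) ^ 2 + (x₂ * (y₁ - y₂)) ^ 2) := add_sq_le
    _ = _ := by ring

lemma sq_mul_sub_mul_div_le {α H₁ H₂ A₂ t x₁ x₂ y₁ y₂ : ℝ} (hα : 1 / 2 ≤ α) (ht : t ∈ Ioc 0 1)
    (hx : |x₁ - x₂| ≤ (H₁ + H₂) * t ^ α) (hx₂ : |x₂| ≤ A₂) :
    (x₁ * y₁ - x₂ * y₂) ^ 2 / t ≤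
      4 * (H₁ ^ 2 + H₂ ^ 2) * y₁ ^ 2 + 2 * A₂ ^ 2 * ((y₁ - y₂) ^ 2 / t) := by
  obtain ⟨ht0, ht1⟩ := ht
  have hdiff : (x₁ - x₂) ^ 2 ≤ 2 * (H₁ ^ 2 + H₂ ^ 2) * t :=
    calc (x₁ - x₂) ^ 2 ≤ ((H₁ + H₂) * t ^ α) ^ 2 := sq_le_sq' (abs_le.mp hx).1 (abs_le.mp hx).2
      _ = (H₁ + H₂) ^ 2 * (t ^ α) ^ 2 := by ring
      _ ≤ 2 * (H₁ ^ 2 + H₂ ^ 2) * t :=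
        mul_le_mul add_sq_le (rpow_sq_le_self hα ht0.le ht1) (sq_nonneg _) (by positivity)
  have hsup : x₂ ^ 2 ≤ A₂ ^ 2 := sq_le_sq' (abs_le.mp hx₂).1 (abs_le.mp hx₂).2
  rw [div_le_iff₀ ht0, add_mul, mul_assoc (2 * A₂ ^ 2), div_mul_cancel₀ _ ht0.ne']
  calc (x₁ * y₁ - x₂ * y₂) ^ 2
      ≤ 2 * ((x₁ - x₂) ^ 2 * y₁ ^ 2) + 2 * (x₂ ^ 2 * (y₁ - y₂) ^ 2) := sq_mul_sub_mul_le ..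
    _ ≤ 2 * (2 * (H₁ ^ 2 + H₂ ^ 2) * t * y₁ ^ 2) + 2 * (A₂ ^ 2 * (y₁ - y₂) ^ 2) := by
      gcongr
    _ = _ := by ring

lemma integrableOn_and_setIntegral_le_of_nonneg_of_le {X : Type*} [MeasurableSpace X]
    {μ : Measure X} {s : Set X} {f g : X → ℝ} (hs : MeasurableSet s)
    (hf : AEStronglyMeasurable f (μ.restrict s)) (hg : IntegrableOn g s μ)
    (hf0 : ∀ x ∈ s, 0 ≤ f x) (hfg : ∀ x ∈ s, f x ≤ g x) :
    IntegrableOn f s μ ∧ ∫ x in s, f x ∂μ ≤ ∫ x in s, g x ∂μ := by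
  have hint : IntegrableOn f s μ := by
    refine hg.mono' hf ((ae_restrict_iff' hs).mpr (Filter.Eventually.of_forall fun x hx => ?_))
    rw [Real.norm_eq_abs, abs_of_nonneg (hf0 x hx)]
    exact hfg x hx
  exact ⟨hint, setIntegral_mono_on hint hg hs hfg⟩

theorem stmt_4_general (α H₁ H₂ A₂ : ℝ) (hα : 1/2 < α)
    (a₁ a₂ g₁ g₂ : ℝ → ℝ)
    (h1 : ∀ x ∈ Set.Icc (0:ℝ) 1, ∀ y ∈ Set.Icc (0:ℝ) 1, |a₁ x - a₁ y| ≤ H₁ * |x - y| ^ α)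
    (h2 : ∀ x ∈ Set.Icc (0:ℝ) 1, ∀ y ∈ Set.Icc (0:ℝ) 1, |a₂ x - a₂ y| ≤ H₂ * |x - y| ^ α)
    (hA₂ : ∀ t ∈ Set.Icc (0:ℝ) 1, |a₂ t| ≤ A₂)
    (h0 : a₁ 0 = a₂ 0)
    (hm1 : Measurable a₁) (hm2 : Measurable a₂)
    (hg1m : Measurable g₁) (hg2m : Measurable g₂)
    (hg1 : IntegrableOn (fun t => (g₁ t)^2) (Set.Ioo 0 1))
    (hcomp : IntegrableOn (fun t => (g₁ t - g₂ t)^2 / t) (Set.Ioo 0 1)) :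
    IntegrableOn (fun t => (a₁ t * g₁ t - a₂ t * g₂ t)^2 / t) (Set.Ioo 0 1) ∧
    ∫ t in Set.Ioo (0:ℝ) 1, (a₁ t * g₁ t - a₂ t * g₂ t)^2 / t ≤
      4 * (H₁^2 + H₂^2) * (∫ t in Set.Ioo (0:ℝ) 1, (g₁ t)^2) +
      2 * A₂^2 * ∫ t in Set.Ioo (0:ℝ) 1, (g₁ t - g₂ t)^2 / t := by
  have hbound : IntegrableOn
      (fun t => 4 * (H₁^2 + H₂^2) * (g₁ t)^2 + 2 * A₂^2 * ((g₁ t - g₂ t)^2 / t)) (Ioo 0 1) :=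
    (hg1.const_mul _).add (hcomp.const_mul _)
  have hmeas : Measurable fun t => (a₁ t * g₁ t - a₂ t * g₂ t)^2 / t := by fun_prop
  have hpointwise : ∀ t ∈ Ioo (0:ℝ) 1, (a₁ t * g₁ t - a₂ t * g₂ t)^2 / t ≤
      4 * (H₁^2 + H₂^2) * (g₁ t)^2 + 2 * A₂^2 * ((g₁ t - g₂ t)^2 / t) := by
    intro t ht
    have hdiff := abs_sub_le_of_holder_of_eq_at_zero h1 h2 h0 (left_mem_Icc.mpr zero_le_one)
      (Ioo_subset_Icc_self ht)
    rw [abs_of_pos ht.1] at hdiff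
    exact sq_mul_sub_mul_div_le hα.le (Ioo_subset_Ioc_self ht) hdiff
      (hA₂ t (Ioo_subset_Icc_self ht))
  obtain ⟨hint, hle⟩ := integrableOn_and_setIntegral_le_of_nonneg_of_le measurableSet_Ioo
    hmeas.aestronglyMeasurable hbound (fun t ht => div_nonneg (sq_nonneg _) ht.1.le) hpointwise
  refine ⟨hint, hle.trans_eq ?_⟩
  rw [integral_add (hg1.const_mul _) (hcomp.const_mul _), integral_const_mul, integral_const_mul]

/-- the first-order compatibility condition is preserved under
multiplication by Hölder functions agreeing at the vertex, with a quantitative bound. -/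
theorem stmt_4 (α H₁ H₂ A₂ : ℝ) (hα : 1/2 < α) (hα1 : α ≤ 1)
    (a₁ a₂ g₁ g₂ : ℝ → ℝ)
    (h1 : ∀ x ∈ Set.Icc (0:ℝ) 1, ∀ y ∈ Set.Icc (0:ℝ) 1, |a₁ x - a₁ y| ≤ H₁ * |x - y| ^ α)
    (h2 : ∀ x ∈ Set.Icc (0:ℝ) 1, ∀ y ∈ Set.Icc (0:ℝ) 1, |a₂ x - a₂ y| ≤ H₂ * |x - y| ^ α)
    (hA₂ : ∀ t ∈ Set.Icc (0:ℝ) 1, |a₂ t| ≤ A₂)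
    (h0 : a₁ 0 = a₂ 0)
    (hm1 : Measurable a₁) (hm2 : Measurable a₂)
    (hg1m : Measurable g₁) (hg2m : Measurable g₂)
    (hg1 : IntegrableOn (fun t => (g₁ t)^2) (Set.Ioo 0 1))
    (hcomp : IntegrableOn (fun t => (g₁ t - g₂ t)^2 / t) (Set.Ioo 0 1)) :
    IntegrableOn (fun t => (a₁ t * g₁ t - a₂ t * g₂ t)^2 / t) (Set.Ioo 0 1) ∧
    ∫ t in Set.Ioo (0:ℝ) 1, (a₁ t * g₁ t - a₂ t * g₂ t)^2 / t ≤
      4 * (H₁^2 + H₂^2) * (∫ t in Set.Ioo (0:ℝ) 1, (g₁ t)^2) +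
      2 * A₂^2 * ∫ t in Set.Ioo (0:ℝ) 1, (g₁ t - g₂ t)^2 / t :=
  stmt_4_general α H₁ H₂ A₂ hα a₁ a₂ g₁ g₂ h1 h2 hA₂ h0 hm1 hm2 hg1m hg2m hg1 hcomp
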